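/- Assume ω > 0, ε ≥ 0, and α(ω+ε) < ωε. Then all four eigenvalues of the Jacobian of the Hamiltonian vector field F at the origin are purely imaginary, namely ±i√(−λ₁) and ±i√(−λ₂), where λ₁ = ((α − ω − 2ε) + √((α+ω)² + 4ε²))/2 < 0 and λ₂ = ((α − ω − 2ε) − √((α+ω)² + 4ε²))/2 < 0; that is, the origin is a centre-centre equilibrium. -/

import Mathlib

/-!
The Jacobian is the linearization of `ẍ = K x` with `K = !![α - ε, ε; ε, -ω - ε]`, so
`det (z - J) = det (z² - K)` and its eigenvalues are the square roots of the eigenvalues `l1, l2`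
of `K`. These are the roots of `t² - (tr K) t + det K`, and both are negative because
`tr K = α - ω - 2ε < 0` and `det K = ωε - α(ω + ε) > 0`; hence the eigenvalues of the Jacobian
are `±i√(-l1)` and `±i√(-l2)`.
-/

/-- Jacobian of the Hamiltonian vector field
`F(x,y,p_x,p_y) = (p_x, p_y, αx − βx³ + ε(y−x), −ωy + ε(x−y))`
at the origin. -/
noncomputable def JacOrigin (α ω ε : ℝ) : Matrix (Fin 4) (Fin 4) ℝ :=
  !![0, 0, 1, 0;
     0, 0, 0, 1;
     α - ε, ε, 0, 0;
     ε, -ω - ε, 0, 0]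

open Complex

section SecondOrderJacobian

variable {R : Type*} [CommRing R]

def secondOrderJacobian (a b c d : R) : Matrix (Fin 4) (Fin 4) R :=
  !![0, 0, 1, 0;
     0, 0, 0, 1;
     a, b, 0, 0;
     c, d, 0, 0]

theorem det_algebraMap_sub_secondOrderJacobian (a b c d z : R) :
    (algebraMap R (Matrix (Fin 4) (Fin 4) R) z - secondOrderJacobian a b c d).det =
      (z ^ 2 - a) * (z ^ 2 - d) - b * c := by
  rw [Matrix.algebraMap_eq_diagonal, Pi.algebraMap_def, Algebra.algebraMap_self_apply]
  simp [secondOrderJacobian, Matrix.det_succ_row_zero, Fin.sum_univ_succ, Fin.succAbove]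
  ring

theorem spectrum_secondOrderJacobian {K : Type*} [Field K] (a b c d : K) :
    spectrum K (secondOrderJacobian a b c d) = {z | (z ^ 2 - a) * (z ^ 2 - d) - b * c = 0} := by
  ext z
  rw [spectrum.mem_iff, Matrix.isUnit_iff_isUnit_det, isUnit_iff_ne_zero, not_not,
    det_algebraMap_sub_secondOrderJacobian, Set.mem_ofPred_eq]

theorem spectrum_secondOrderJacobian_eq_of_sq {K : Type*} [Field K] (a b c d u v : K)
    (hsum : u ^ 2 + v ^ 2 = a + d) (hprod : u ^ 2 * v ^ 2 = a * d - b * c) :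
    spectrum K (secondOrderJacobian a b c d) = {u, -u, v, -v} := by
  have hfactor : ∀ z : K, (z ^ 2 - a) * (z ^ 2 - d) - b * c = (z ^ 2 - u ^ 2) * (z ^ 2 - v ^ 2) :=
    fun z => by linear_combination z ^ 2 * hsum - hprod
  ext z
  simp only [spectrum_secondOrderJacobian, hfactor, Set.mem_ofPred_eq, mul_eq_zero, sub_eq_zero,
    sq_eq_sq_iff_eq_or_eq_neg, Set.mem_insert_iff, Set.mem_singleton_iff, or_assoc]

end SecondOrderJacobian

theorem jacOrigin_map_ofReal (α ω ε : ℝ) :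
    (JacOrigin α ω ε).map ofReal =
      secondOrderJacobian (↑(α - ε)) (↑ε) (↑ε) (↑(-ω - ε) : ℂ) := by
  ext i j
  fin_cases i <;> fin_cases j <;> simp [JacOrigin, secondOrderJacobian]

theorem Complex.sq_I_mul_sqrt_neg {x : ℝ} (hx : x ≤ 0) : (I * √(-x)) ^ 2 = x := by
  rw [mul_pow, I_sq, ← ofReal_pow, Real.sq_sqrt (neg_nonneg.mpr hx)]
  push_cast
  ring

theorem Real.mul_quadratic_roots (S D : ℝ) (hD : 0 ≤ D) :
    (S + √D) / 2 * ((S - √D) / 2) = (S ^ 2 - D) / 4 := by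
  linear_combination (-1 / 4 : ℝ) * Real.sq_sqrt hD

theorem origin_centre_centre (α ω ε : ℝ) (hω : 0 < ω) (hε : 0 ≤ ε)
    (h : α * (ω + ε) < ω * ε) (l1 l2 : ℝ)
    (hl1 : l1 = ((α - ω - 2 * ε) + Real.sqrt ((α + ω) ^ 2 + 4 * ε ^ 2)) / 2)
    (hl2 : l2 = ((α - ω - 2 * ε) - Real.sqrt ((α + ω) ^ 2 + 4 * ε ^ 2)) / 2) :
    l1 < 0 ∧ l2 < 0 ∧
    spectrum ℂ ((JacOrigin α ω ε).map (Complex.ofReal)) =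
      {Complex.I * (Real.sqrt (-l1) : ℂ), -(Complex.I * (Real.sqrt (-l1) : ℂ)),
       Complex.I * (Real.sqrt (-l2) : ℂ), -(Complex.I * (Real.sqrt (-l2) : ℂ))} := by
  have hsum : l1 + l2 = (α - ε) + (-ω - ε) := by rw [hl1, hl2]; ring
  have hprod : l1 * l2 = (α - ε) * (-ω - ε) - ε * ε := by
    rw [hl1, hl2, Real.mul_quadratic_roots _ _ (by positivity)]; ring
  have htrace : l1 + l2 < 0 := by rw [hsum]; nlinarith
  have hdet : 0 < l1 * l2 := by rw [hprod]; linarith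
  have hneg : l1 < 0 ∧ l2 < 0 :=
    (pos_and_pos_or_neg_and_neg_of_mul_pos hdet).resolve_left fun ⟨h1, h2⟩ => by linarith
  refine ⟨hneg.1, hneg.2, ?_⟩
  rw [jacOrigin_map_ofReal]
  apply spectrum_secondOrderJacobian_eq_of_sq
  · rw [sq_I_mul_sqrt_neg hneg.1.le, sq_I_mul_sqrt_neg hneg.2.le]; exact_mod_cast hsum
  · rw [sq_I_mul_sqrt_neg hneg.1.le, sq_I_mul_sqrt_neg hneg.2.le]; exact_mod_cast hprod
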